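/- arXiv:1202.0298 — 2 statements merged into one kernel-verified Lean document; each statement's English description precedes it below -/
import Mathlib

section
/- Let a > 0, b > 0, M ≥ 1 a natural number, and x_1, …, x_M nonnegative real numbers. Then ∑_{i=1}^M Γ(a, b·x_i^(1/a)) ≥ M · Γ(a, b·((x_1 + ⋯ + x_M)/M)^(1/a)). -/
/-!
By the chain rule and `∂ₓ Γ(s, x) = -x^(s-1) e^(-x)`, the function `x ↦ Γ(s, b x^(1/s))` has
derivative `-(b^s / s) e^(-b x^(1/s))` on `x > 0`: the powers of `x` cancel exactly because the
exponent is `1/s`. This derivative is increasing, so the function is convex on `[0, ∞)`, and the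
inequality is Jensen's inequality for the uniform weights `1/M`.
-/

open Real Finset

/-- The upper incomplete gamma function `Γ(s, x) = ∫_x^∞ t^(s-1) e^(-t) dt`. -/
noncomputable def upperIncompleteGamma (s x : ℝ) : ℝ :=
  ∫ t in Set.Ioi x, t ^ (s - 1) * Real.exp (-t)

open Set MeasureTheory

theorem ConvexOn.card_mul_map_sum_div_card_le {D : Set ℝ} {f : ℝ → ℝ} (hf : ConvexOn ℝ D f)
    {ι : Type*} (t : Finset ι) (p : ι → ℝ) (hp : ∀ i ∈ t, p i ∈ D) :
    #t * f ((∑ i ∈ t, p i) / #t) ≤ ∑ i ∈ t, f (p i) := by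
  rcases t.eq_empty_or_nonempty with rfl | ht
  · simp
  have hcard : (0 : ℝ) < #t := by exact_mod_cast ht.card_pos
  have hjensen := hf.map_sum_le (t := t) (w := fun _ => (#t : ℝ)⁻¹) (fun _ _ => by positivity)
    (by simp [hcard.ne']) hp
  rw [← Finset.smul_sum, ← Finset.smul_sum, smul_eq_mul, smul_eq_mul, inv_mul_eq_div,
    inv_mul_eq_div, le_div_iff₀ hcard] at hjensen
  linarith

theorem integrableOn_rpow_sub_one_mul_exp_neg {s : ℝ} (hs : 0 < s) :
    IntegrableOn (fun t : ℝ => t ^ (s - 1) * exp (-t)) (Ioi 0) :=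
  (GammaIntegral_convergent hs).congr_fun (fun _ _ => mul_comm _ _) measurableSet_Ioi

theorem continuousOn_upperIncompleteGamma {s : ℝ} (hs : 0 < s) :
    ContinuousOn (upperIncompleteGamma s) (Ici 0) :=
  (integrableOn_rpow_sub_one_mul_exp_neg hs).continuousOn_Ici_primitive_Ioi

theorem upperIncompleteGamma_eq_sub_integral {s y : ℝ} (hs : 0 < s) (hy : 0 ≤ y) :
    upperIncompleteGamma s y =
      upperIncompleteGamma s 0 - ∫ t in (0 : ℝ)..y, t ^ (s - 1) * exp (-t) := by
  rw [upperIncompleteGamma, upperIncompleteGamma,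
    ← intervalIntegral.integral_Ioi_sub_Ioi (integrableOn_rpow_sub_one_mul_exp_neg hs) hy,
    sub_sub_cancel]

theorem hasDerivAt_upperIncompleteGamma {s y : ℝ} (hs : 0 < s) (hy : 0 < y) :
    HasDerivAt (upperIncompleteGamma s) (-(y ^ (s - 1) * exp (-y))) y := by
  have hcont : ContinuousOn (fun t : ℝ => t ^ (s - 1) * exp (-t)) (Ioi 0) :=
    (continuousOn_id.rpow_const fun t ht => Or.inl (ne_of_gt ht)).mul (by fun_prop)
  have hprim : HasDerivAt (fun u => ∫ t in (0 : ℝ)..u, t ^ (s - 1) * exp (-t))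
      (y ^ (s - 1) * exp (-y)) y :=
    intervalIntegral.integral_hasDerivAt_right
      ((intervalIntegrable_iff_integrableOn_Ioc_of_le hy.le).2
        ((integrableOn_rpow_sub_one_mul_exp_neg hs).mono_set Ioc_subset_Ioi_self))
      (hcont.stronglyMeasurableAtFilter isOpen_Ioi y hy)
      (hcont.continuousAt (Ioi_mem_nhds hy))
  refine (hprim.const_sub (upperIncompleteGamma s 0)).congr_of_eventuallyEq ?_
  filter_upwards [eventually_ge_nhds hy] with u hu
  exact upperIncompleteGamma_eq_sub_integral hs hu

theorem hasDerivAt_upperIncompleteGamma_mul_rpow_inv {s b x : ℝ} (hs : 0 < s) (hb : 0 < b)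
    (hx : 0 < x) :
    HasDerivAt (fun x => upperIncompleteGamma s (b * x ^ (1 / s)))
      (-(b ^ s / s * exp (-(b * x ^ (1 / s))))) x := by
  have hinner : HasDerivAt (fun x : ℝ => b * x ^ (1 / s)) (b * (1 / s * x ^ (1 / s - 1))) x :=
    (hasDerivAt_rpow_const (Or.inl hx.ne')).const_mul b
  refine ((hasDerivAt_upperIncompleteGamma hs (by positivity)).comp x hinner).congr_deriv ?_
  have hexp : 1 / s * (s - 1) + (1 / s - 1) = 0 := by field_simp; ring
  have key : (b * x ^ (1 / s)) ^ (s - 1) * (b * (1 / s * x ^ (1 / s - 1))) = b ^ s / s := by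
    rw [mul_rpow hb.le (by positivity), ← rpow_mul hx.le, rpow_sub_one hb.ne']
    calc b ^ s / b * x ^ (1 / s * (s - 1)) * (b * (1 / s * x ^ (1 / s - 1)))
        = b ^ s / s * x ^ (1 / s * (s - 1) + (1 / s - 1)) := by
          rw [rpow_add hx]; field_simp
      _ = b ^ s / s := by rw [hexp, rpow_zero, mul_one]
  rw [← key]
  ring

theorem convexOn_upperIncompleteGamma_mul_rpow_inv {s b : ℝ} (hs : 0 < s) (hb : 0 < b) :
    ConvexOn ℝ (Ici 0) fun x => upperIncompleteGamma s (b * x ^ (1 / s)) := by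
  have hinner : Continuous fun x : ℝ => b * x ^ (1 / s) :=
    continuous_const.mul (continuous_id.rpow_const fun _ => Or.inr (by positivity))
  have hderiv : ∀ x ∈ interior (Ici (0 : ℝ)),
      HasDerivAt (fun x => upperIncompleteGamma s (b * x ^ (1 / s)))
        (-(b ^ s / s * exp (-(b * x ^ (1 / s))))) x := by
    rw [interior_Ici]
    exact fun x hx => hasDerivAt_upperIncompleteGamma_mul_rpow_inv hs hb hx
  refine MonotoneOn.convexOn_of_deriv (convex_Ici 0)
    ((continuousOn_upperIncompleteGamma hs).comp hinner.continuousOn fun x hx => ?_)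
    (fun x hx => (hderiv x hx).differentiableAt.differentiableWithinAt) fun x hx y hy hxy => ?_
  · exact mul_nonneg hb.le (rpow_nonneg hx _)
  · rw [(hderiv x hx).deriv, (hderiv y hy).deriv, neg_le_neg_iff]
    rw [interior_Ici] at hx
    gcongr
    exact le_of_lt hx

theorem sum_upperIncompleteGamma_ge_general (a b : ℝ) (ha : 0 < a) (hb : 0 < b)
    (M : ℕ) (x : Fin M → ℝ) (hx : ∀ i, 0 ≤ x i) :
    (M : ℝ) * upperIncompleteGamma a (b * ((∑ i, x i) / M) ^ (1 / a)) ≤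
      ∑ i, upperIncompleteGamma a (b * (x i) ^ (1 / a)) := by
  simpa using (convexOn_upperIncompleteGamma_mul_rpow_inv ha hb).card_mul_map_sum_div_card_le
    univ x fun i _ => hx i

/-- Jensen-type inequality:
`∑_{i=1}^M Γ(a, b·x_i^(1/a)) ≥ M · Γ(a, b·((x_1 + ⋯ + x_M)/M)^(1/a))`. -/
theorem sum_upperIncompleteGamma_ge (a b : ℝ) (ha : 0 < a) (hb : 0 < b)
    (M : ℕ) (hM : 1 ≤ M) (x : Fin M → ℝ) (hx : ∀ i, 0 ≤ x i) :
    (M : ℝ) * upperIncompleteGamma a (b * ((∑ i, x i) / M) ^ (1 / a)) ≤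
      ∑ i, upperIncompleteGamma a (b * (x i) ^ (1 / a)) :=
  sum_upperIncompleteGamma_ge_general a b ha hb M x hx
end

section
/- Let M be an invertible N×N real matrix (N ≥ 1), let h_1, …, h_N be positive real numbers, H = diag(h_1, …, h_N), and σ > 0. Let d_min = inf{‖Mz‖ : z ∈ ℤ^N, z ≠ 0} and assume d_min > 0. Let V = {x ∈ ℝ^N : ‖x‖ ≤ ‖x − p‖ for all p ∈ HMℤ^N, p ≠ 0} be the Voronoi cell of the origin of the faded lattice. Then ∫_V (2πσ²)^(−N/2)·exp(−‖z‖²/(2σ²)) dz ≥ 1 − Γ(N/2, 𝓡²/(2σ²))/Γ(N/2), where 𝓡 = (d_min/2)·min_{j=1,…,N} h_j. -/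
/-! A nonzero point of the faded lattice `HMℤ^N` is `H` applied to a nonzero point of `Mℤ^N`, so
its norm is at least `(min_j h_j) · d_min = 2𝓡`. By the triangle inequality every point of the
closed ball of radius `𝓡` is then no farther from the origin than from any such point: the ball
lies in the Voronoi cell. The Gaussian mass of the ball is computed in polar coordinates, where the
substitution `t = r² / (2σ²)` turns the radial tail into `Γ(N/2, 𝓡²/(2σ²))` and the volume
`π^(N/2) / Γ(N/2 + 1)` of the unit ball supplies the normalisation. -/

open MeasureTheory Real Finset

/-- The Euclidean norm on `Fin N → ℝ`. -/
noncomputable def euclNorm {N : ℕ} (v : Fin N → ℝ) : ℝ :=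
  Real.sqrt (∑ i, v i ^ 2)

open Set Metric Module
open scoped Matrix

theorem norm_le_norm_sub_of_two_mul_le {F : Type*} [SeminormedAddCommGroup F] {x p : F} {r : ℝ}
    (hx : ‖x‖ ≤ r) (hp : 2 * r ≤ ‖p‖) : ‖x‖ ≤ ‖x - p‖ := by
  have := norm_sub_norm_le p x
  rw [norm_sub_rev] at this
  linarith

theorem integral_Ioi_pow_mul_exp_neg_sq_div {n : ℕ} (hn : 1 ≤ n) {c R : ℝ} (hc : 0 < c)
    (hR : 0 ≤ R) :
    ∫ r in Ioi R, r ^ (n - 1) * exp (-r ^ 2 / c) =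
      c ^ ((n : ℝ) / 2) / 2 * upperIncompleteGamma ((n : ℝ) / 2) (R ^ 2 / c) := by
  set f : ℝ → ℝ := fun r => r ^ 2 / c
  have hf_mono : StrictMonoOn f (Ici R) := fun x hx y _ hxy =>
    div_lt_div_of_pos_right (pow_lt_pow_left₀ hxy (hR.trans hx) two_ne_zero) hc
  have hf_image : f '' Ioi R = Ioi (R ^ 2 / c) :=
    (by fun_prop : Continuous f).continuousOn.image_Ioi_of_strictMonoOn hf_mono
      ((Filter.tendsto_pow_atTop two_ne_zero).atTop_div_const hc)
  have hf_deriv : ∀ r ∈ Ioi R, HasDerivWithinAt f (2 * r / c) (Ioi R) r := fun r _ => by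
    simpa using ((hasDerivAt_pow 2 r).div_const c).hasDerivWithinAt
  rw [upperIncompleteGamma, ← hf_image, integral_image_eq_integral_abs_deriv_smul
    measurableSet_Ioi hf_deriv (hf_mono.injOn.mono Ioi_subset_Ici_self), ← integral_const_mul]
  refine setIntegral_congr_fun measurableSet_Ioi fun r (hr : R < r) => ?_
  have hr0 : 0 < r := hR.trans_lt hr
  have h_jacobian : c ^ ((n : ℝ) / 2) / 2 * (2 * r / c) * (r ^ 2 / c) ^ ((n : ℝ) / 2 - 1) =
      r ^ (n - 1) := by
    have hr_pow : (r ^ 2) ^ ((n : ℝ) / 2 - 1) = r ^ (n - 1) / r := by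
      rw [← rpow_natCast_mul hr0.le, ← rpow_natCast, Nat.cast_sub hn, ← rpow_sub_one hr0.ne']
      push_cast
      ring_nf
    rw [div_rpow (by positivity) hc.le, hr_pow, rpow_sub_one hc.ne']
    field_simp
  simp only [f, smul_eq_mul, abs_of_pos (by positivity : 0 < 2 * r / c)]
  rw [← h_jacobian, neg_div]
  ring

section Gaussian

variable {E : Type*} [NormedAddCommGroup E] [InnerProductSpace ℝ E] [FiniteDimensional ℝ E]
  [MeasurableSpace E] [BorelSpace E]

theorem integral_exp_neg_sq_norm_div {c : ℝ} (hc : 0 < c) :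
    ∫ x : E, exp (-‖x‖ ^ 2 / c) = (π * c) ^ ((finrank ℝ E : ℝ) / 2) := by
  have h := GaussianFourier.integral_rexp_neg_mul_sq_norm (V := E) (inv_pos.mpr hc)
  simpa only [div_inv_eq_mul, neg_mul, inv_mul_eq_div, neg_div] using h

theorem integrable_exp_neg_sq_norm_div {c : ℝ} (hc : 0 < c) :
    Integrable fun x : E => exp (-‖x‖ ^ 2 / c) :=
  Integrable.of_integral_ne_zero (by rw [integral_exp_neg_sq_norm_div hc]; positivity)

variable [Nontrivial E]

theorem integral_compl_closedBall_exp_neg_sq_norm_div {c R : ℝ} (hc : 0 < c) (hR : 0 ≤ R) :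
    ∫ x in (closedBall (0 : E) R)ᶜ, exp (-‖x‖ ^ 2 / c) =
      (π * c) ^ ((finrank ℝ E : ℝ) / 2) *
        upperIncompleteGamma ((finrank ℝ E : ℝ) / 2) (R ^ 2 / c) /
          Gamma ((finrank ℝ E : ℝ) / 2) := by
  have hn : 1 ≤ finrank ℝ E := finrank_pos
  have h_indicator : ∀ x : E,
      (closedBall (0 : E) R)ᶜ.indicator (fun x => exp (-‖x‖ ^ 2 / c)) x =
        (Ioi R).indicator (fun r => exp (-r ^ 2 / c)) ‖x‖ := fun x => by
    by_cases hx : R < ‖x‖ <;> simp [hx]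
  have h_radial : ∀ r : ℝ,
      r ^ (finrank ℝ E - 1) • (Ioi R).indicator (fun r => exp (-r ^ 2 / c)) r =
        (Ioi R).indicator (fun r => r ^ (finrank ℝ E - 1) * exp (-r ^ 2 / c)) r := fun r => by
    by_cases hr : r ∈ Ioi R <;> simp [hr]
  have h_unit_ball : volume.real (ball (0 : E) 1) =
      π ^ ((finrank ℝ E : ℝ) / 2) / (finrank ℝ E / 2 * Gamma (finrank ℝ E / 2)) := by
    rw [measureReal_def, InnerProductSpace.volume_ball, ENNReal.ofReal_one, one_pow, one_mul,
      ENNReal.toReal_ofReal (by positivity), Gamma_add_one (by positivity), sqrt_eq_rpow,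
      ← rpow_natCast, ← rpow_mul pi_pos.le]
    ring_nf
  rw [← integral_indicator measurableSet_closedBall.compl, funext h_indicator,
    integral_fun_norm_addHaar, funext h_radial, integral_indicator measurableSet_Ioi,
    Measure.restrict_restrict measurableSet_Ioi, Ioi_inter_Ioi, sup_eq_left.mpr hR,
    integral_Ioi_pow_mul_exp_neg_sq_div hn hc hR, h_unit_ball, mul_rpow pi_pos.le hc.le,
    nsmul_eq_mul, smul_eq_mul]
  have hn_ne : (finrank ℝ E : ℝ) ≠ 0 := by positivity
  have hΓ_ne := (Gamma_pos_of_pos (by positivity : (0 : ℝ) < finrank ℝ E / 2)).ne'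
  field_simp

theorem integral_closedBall_gaussian {σ R : ℝ} (hσ : 0 < σ) (hR : 0 ≤ R) :
    ∫ x in closedBall (0 : E) R,
        (2 * π * σ ^ 2) ^ (-(finrank ℝ E : ℝ) / 2) * exp (-‖x‖ ^ 2 / (2 * σ ^ 2)) =
      1 - upperIncompleteGamma ((finrank ℝ E : ℝ) / 2) (R ^ 2 / (2 * σ ^ 2)) /
        Gamma ((finrank ℝ E : ℝ) / 2) := by
  have hc : 0 < 2 * σ ^ 2 := by positivity
  have h_split := integral_add_compl (measurableSet_closedBall (x := (0 : E)) (ε := R))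
    (integrable_exp_neg_sq_norm_div hc)
  rw [integral_compl_closedBall_exp_neg_sq_norm_div hc hR, integral_exp_neg_sq_norm_div hc]
    at h_split
  have h_normalize : (2 * π * σ ^ 2) ^ (-(finrank ℝ E : ℝ) / 2) *
      (π * (2 * σ ^ 2)) ^ ((finrank ℝ E : ℝ) / 2) = 1 := by
    rw [show π * (2 * σ ^ 2) = 2 * π * σ ^ 2 by ring, ← rpow_add (by positivity), neg_div,
      neg_add_cancel, rpow_zero]
  rw [integral_const_mul, eq_sub_of_add_eq h_split]
  linear_combination (1 - upperIncompleteGamma ((finrank ℝ E : ℝ) / 2) (R ^ 2 / (2 * σ ^ 2)) /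
    Gamma ((finrank ℝ E : ℝ) / 2)) * h_normalize

end Gaussian

section Lattice

variable {N : ℕ}

theorem euclNorm_eq_norm_toLp (v : Fin N → ℝ) : euclNorm v = ‖WithLp.toLp 2 v‖ := by
  simp [EuclideanSpace.norm_eq, euclNorm, sq_abs]

theorem euclNorm_smul (a : ℝ) (v : Fin N → ℝ) : euclNorm (a • v) = |a| * euclNorm v := by
  simp only [euclNorm_eq_norm_toLp, WithLp.toLp_smul, norm_smul, norm_eq_abs]

theorem euclNorm_le_euclNorm_of_abs_le {v w : Fin N → ℝ} (h : ∀ i, |v i| ≤ |w i|) :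
    euclNorm v ≤ euclNorm w :=
  sqrt_le_sqrt (sum_le_sum fun i _ => sq_le_sq.mpr (h i))

theorem mul_euclNorm_le_euclNorm_diagonal_mulVec {h : Fin N → ℝ} {m : ℝ} (hm : 0 ≤ m)
    (hmh : ∀ i, m ≤ h i) (y : Fin N → ℝ) :
    m * euclNorm y ≤ euclNorm (Matrix.diagonal h *ᵥ y) := by
  rw [← abs_of_nonneg hm, ← euclNorm_smul]
  refine euclNorm_le_euclNorm_of_abs_le fun i => ?_
  rw [Matrix.mulVec_diagonal, Pi.smul_apply, smul_eq_mul, abs_mul, abs_mul, abs_of_nonneg hm]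
  gcongr
  exact (hmh i).trans (le_abs_self _)

noncomputable def latticeMinDist (M : Matrix (Fin N) (Fin N) ℝ) : ℝ :=
  sInf {r : ℝ | ∃ z : Fin N → ℤ, z ≠ 0 ∧ r = euclNorm (M *ᵥ fun i => (z i : ℝ))}

theorem latticeMinDist_le (M : Matrix (Fin N) (Fin N) ℝ) {z : Fin N → ℤ} (hz : z ≠ 0) :
    latticeMinDist M ≤ euclNorm (M *ᵥ fun i => (z i : ℝ)) :=
  csInf_le ⟨0, by rintro _ ⟨_, _, rfl⟩; exact sqrt_nonneg _⟩ ⟨z, hz, rfl⟩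

theorem euclNorm_le_euclNorm_sub_fadedLatticePoint (M : Matrix (Fin N) (Fin N) ℝ) {h : Fin N → ℝ}
    {m : ℝ} (hm : 0 ≤ m) (hmh : ∀ i, m ≤ h i) {x : Fin N → ℝ}
    (hx : euclNorm x ≤ latticeMinDist M / 2 * m) {z : Fin N → ℤ} (hz : z ≠ 0) :
    euclNorm x ≤ euclNorm (x - Matrix.diagonal h *ᵥ (M *ᵥ fun i => (z i : ℝ))) := by
  have hp : 2 * (latticeMinDist M / 2 * m) ≤
      euclNorm (Matrix.diagonal h *ᵥ (M *ᵥ fun i => (z i : ℝ))) :=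
    calc 2 * (latticeMinDist M / 2 * m) = m * latticeMinDist M := by ring
      _ ≤ m * euclNorm (M *ᵥ fun i => (z i : ℝ)) := by gcongr; exact latticeMinDist_le M hz
      _ ≤ _ := mul_euclNorm_le_euclNorm_diagonal_mulVec hm hmh _
  rw [euclNorm_eq_norm_toLp] at hx hp ⊢
  rw [euclNorm_eq_norm_toLp, WithLp.toLp_sub]
  exact norm_le_norm_sub_of_two_mul_le hx hp

theorem setIntegral_comp_euclNorm (g : ℝ → ℝ) (s : Set (Fin N → ℝ)) :
    ∫ z in s, g (euclNorm z) =
      ∫ x in WithLp.ofLp ⁻¹' s, g ‖x‖ ∂(volume : Measure (EuclideanSpace ℝ (Fin N))) := by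
  rw [← (PiLp.volume_preserving_ofLp (Fin N)).setIntegral_preimage_emb
    (MeasurableEquiv.toLp 2 (Fin N → ℝ)).symm.measurableEmbedding]
  simp only [euclNorm_eq_norm_toLp, WithLp.toLp_ofLp]

end Lattice

theorem sphere_upper_bound_pointwise_general (N : ℕ) (hN : 1 ≤ N)
    (M : Matrix (Fin N) (Fin N) ℝ)
    (h : Fin N → ℝ) (hh : ∀ j, 0 < h j) (σ : ℝ) (hσ : 0 < σ)
    (dmin : ℝ)
    (hdmin : dmin = sInf {r : ℝ | ∃ z : Fin N → ℤ, z ≠ 0 ∧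
      r = euclNorm (M.mulVec (fun i => (z i : ℝ)))})
    (hdpos : 0 < dmin)
    (V : Set (Fin N → ℝ))
    (hV : V = {x : Fin N → ℝ | ∀ p : Fin N → ℝ,
      (∃ z : Fin N → ℤ, z ≠ 0 ∧
        p = (Matrix.diagonal h).mulVec (M.mulVec (fun i => (z i : ℝ)))) →
      euclNorm x ≤ euclNorm (x - p)}) :
    1 - upperIncompleteGamma ((N : ℝ) / 2)
          ((dmin / 2 * Finset.univ.inf' (Finset.univ_nonempty_iff.mpr ⟨⟨0, hN⟩⟩) h) ^ 2 /
            (2 * σ ^ 2)) /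
        Real.Gamma ((N : ℝ) / 2) ≤
      ∫ z in V, (2 * π * σ ^ 2) ^ (-(N : ℝ) / 2) *
        Real.exp (-(euclNorm z) ^ 2 / (2 * σ ^ 2)) := by
  have : Nonempty (Fin N) := ⟨⟨0, hN⟩⟩
  set m := Finset.univ.inf' (Finset.univ_nonempty_iff.mpr ⟨⟨0, hN⟩⟩) h
  have hm : 0 < m := (lt_inf'_iff _).mpr fun j _ => hh j
  have h_ball : closedBall (0 : EuclideanSpace ℝ (Fin N)) (dmin / 2 * m) ⊆ WithLp.ofLp ⁻¹' V := by
    intro x hx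
    rw [Set.mem_preimage, hV]
    rintro p ⟨z, hz, rfl⟩
    subst hdmin
    refine euclNorm_le_euclNorm_sub_fadedLatticePoint M hm.le (fun i => inf'_le h (mem_univ i)) ?_ hz
    rwa [euclNorm_eq_norm_toLp, WithLp.toLp_ofLp, ← mem_closedBall_zero_iff]
  have h_mass := integral_closedBall_gaussian (E := EuclideanSpace ℝ (Fin N)) hσ
    (R := dmin / 2 * m) (by positivity)
  rw [finrank_euclideanSpace_fin] at h_mass
  rw [setIntegral_comp_euclNorm (fun t => (2 * π * σ ^ 2) ^ (-(N : ℝ) / 2) *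
    exp (-t ^ 2 / (2 * σ ^ 2))), ← h_mass]
  exact setIntegral_mono_set
    ((integrable_exp_neg_sq_norm_div (by positivity)).const_mul _).integrableOn
    (ae_of_all _ fun x => by positivity) h_ball.eventuallyLE

/-- Pointwise Sphere Upper Bound: the Gaussian probability of the Voronoi cell of the
origin of the faded lattice `HMℤ^N` is at least the Gaussian probability of the ball
of radius `𝓡 = (d_min/2)·min_j h_j`, i.e. `1 − Γ(N/2, 𝓡²/(2σ²))/Γ(N/2)`. -/
theorem sphere_upper_bound_pointwise (N : ℕ) (hN : 1 ≤ N)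
    (M : Matrix (Fin N) (Fin N) ℝ) (hM : IsUnit M.det)
    (h : Fin N → ℝ) (hh : ∀ j, 0 < h j) (σ : ℝ) (hσ : 0 < σ)
    (dmin : ℝ)
    (hdmin : dmin = sInf {r : ℝ | ∃ z : Fin N → ℤ, z ≠ 0 ∧
      r = euclNorm (M.mulVec (fun i => (z i : ℝ)))})
    (hdpos : 0 < dmin)
    (V : Set (Fin N → ℝ))
    (hV : V = {x : Fin N → ℝ | ∀ p : Fin N → ℝ,
      (∃ z : Fin N → ℤ, z ≠ 0 ∧
        p = (Matrix.diagonal h).mulVec (M.mulVec (fun i => (z i : ℝ)))) →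
      euclNorm x ≤ euclNorm (x - p)}) :
    1 - upperIncompleteGamma ((N : ℝ) / 2)
          ((dmin / 2 * Finset.univ.inf' (Finset.univ_nonempty_iff.mpr ⟨⟨0, hN⟩⟩) h) ^ 2 /
            (2 * σ ^ 2)) /
        Real.Gamma ((N : ℝ) / 2) ≤
      ∫ z in V, (2 * π * σ ^ 2) ^ (-(N : ℝ) / 2) *
        Real.exp (-(euclNorm z) ^ 2 / (2 * σ ^ 2)) :=
  sphere_upper_bound_pointwise_general N hN M h hh σ hσ dmin hdmin hdpos V hV
end
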